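/- Let G be a finite abelian group, k a positive integer, and x ∈ S(G). If ‖x‖_∞ = 1/k and ‖V²x‖_∞ = 1/k (where V² = V ∘ V), then there exist a subgroup H ≤ G with |H| = k and an element p ∈ G such that x is the uniform distribution on the coset p + H, i.e. x(g) = 1/k for g ∈ p + H and x(g) = 0 otherwise; moreover Vx is then the uniform distribution on the coset 2p + H. In particular, every periodic point of V whose sup-norm equals 1/k is a uniform distribution on a coset of a subgroup of order k. -/

import Mathlib

open Finset

/- The quadratic stochastic operator (convolution square) on a finite abelian group:
`(Vx)(h) = ∑_{f,g ∈ G, f+g=h} x(f)·x(g)`. -/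
open Classical in
noncomputable def QSO {G : Type*} [AddCommGroup G] [Fintype G] (x : G → ℝ) : G → ℝ :=
  fun h => ∑ p ∈ Finset.univ.filter (fun p : G × G => p.1 + p.2 = h), x p.1 * x p.2

/-! Write `c = 1/k`. If `x ≤ c` then also `Vx ≤ c`, and `(Vx)(h) = ∑_f x(f) x(h - f)` is an
`x`-weighted mean of values `≤ c`; so `(Vx)(h) = c` forces `x(h - f) = c` on the support of `x`.
Applied to `V²x(t) = c` and then to `Vx`, whose support contains `supp x + supp x`, this gives
`x(t - a - b - d) = c` for all `a, b, d ∈ supp x`. A set closed under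
`(a, b, d) ↦ t - a - b - d` is a coset `p + H` of a subgroup, `x` equals `c` on it, and `∑ x = 1`
gives `|H| = k`; the convolution square of the uniform distribution on `p + H` is the uniform
distribution on `2p + H`. -/

theorem exists_norm_apply_eq_pi_norm {ι : Type*} [Fintype ι] [Nonempty ι] {E : ι → Type*}
    [∀ i, SeminormedAddGroup (E i)] (f : ∀ i, E i) : ∃ i, ‖f i‖ = ‖f‖ := by
  obtain ⟨i, -, hi⟩ := Finset.exists_mem_eq_sup univ univ_nonempty fun i => ‖f i‖₊
  exact ⟨i, by rw [Pi.norm_def, hi]; rfl⟩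

theorem AddSubgroup.exists_mem_iff_sub_mem_of_sub_sub_sub_mem {G : Type*} [AddCommGroup G]
    {A : Set G} {t a₀ : G} (ha₀ : a₀ ∈ A) (hA : ∀ a ∈ A, ∀ b ∈ A, ∀ d ∈ A, t - a - b - d ∈ A) :
    ∃ H : AddSubgroup G, ∀ g, g ∈ A ↔ g - a₀ ∈ H := by
  set S : Set G := {u | u + a₀ ∈ A}
  -- translating `A` by `-a₀` turns the triple map into `(u, v) ↦ s - u - v`, `s = t - 4 • a₀`
  have hS : ∀ u ∈ S, ∀ v ∈ S, t - 4 • a₀ - u - v ∈ S := fun u hu v hv => by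
    have := hA _ hu _ hv _ ha₀
    rwa [show t - (u + a₀) - (v + a₀) - a₀ = t - 4 • a₀ - u - v + a₀ by abel] at this
  have h0 : (0 : G) ∈ S := by simpa [S] using ha₀
  -- `u - v = s - (s - u - 0) - v`
  have hsub : ∀ u ∈ S, ∀ v ∈ S, u + -v ∈ S := fun u hu v hv => by
    have := hS _ (hS u hu 0 h0) v hv
    rwa [show t - 4 • a₀ - (t - 4 • a₀ - u - 0) - v = u + -v by abel] at this
  refine ⟨AddSubgroup.ofSub S ⟨0, h0⟩ hsub, fun g => ?_⟩
  change g ∈ A ↔ g - a₀ + a₀ ∈ A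
  rw [sub_add_cancel]

section QSO

variable {G : Type*} [AddCommGroup G] [Fintype G]

theorem QSO_apply (x : G → ℝ) (h : G) : QSO x h = ∑ f, x f * x (h - f) := by
  classical
  rw [QSO, Finset.sum_filter, Fintype.sum_prod_type]
  refine Finset.sum_congr rfl fun f _ => ?_
  rw [Finset.sum_eq_single (h - f)]
  · simp
  · rintro g - hg
    rw [if_neg fun hfg => hg (eq_sub_of_add_eq' hfg)]
  · simp

theorem sum_QSO (x : G → ℝ) : ∑ h, QSO x h = (∑ g, x g) ^ 2 := by
  simp_rw [QSO_apply, sq]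
  rw [Finset.sum_comm, Finset.sum_mul]
  refine Finset.sum_congr rfl fun f _ => ?_
  rw [← Finset.mul_sum, Fintype.sum_equiv (Equiv.subRight f) (fun h => x (h - f)) x fun _ => rfl]

theorem mul_le_QSO_add {x : G → ℝ} (hx : ∀ g, 0 ≤ x g) (a b : G) :
    x a * x b ≤ QSO x (a + b) := by
  rw [QSO_apply]
  simpa using Finset.single_le_sum (fun f _ => mul_nonneg (hx f) (hx (a + b - f))) (mem_univ a)

theorem QSO_nonneg {x : G → ℝ} (hx : ∀ g, 0 ≤ x g) (h : G) : 0 ≤ QSO x h :=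
  (QSO_apply x h).symm ▸ Finset.sum_nonneg fun f _ => mul_nonneg (hx f) (hx (h - f))

theorem QSO_mem_stdSimplex {x : G → ℝ} (hx : x ∈ stdSimplex ℝ G) : QSO x ∈ stdSimplex ℝ G :=
  ⟨QSO_nonneg hx.1, by rw [sum_QSO, hx.2, one_pow]⟩

section Extremal

variable {x : G → ℝ} {c : ℝ}

theorem QSO_le (hx : x ∈ stdSimplex ℝ G) (hle : ∀ g, x g ≤ c) (h : G) :
    QSO x h ≤ c :=
  calc QSO x h = ∑ f, x f * x (h - f) := QSO_apply x h
    _ ≤ ∑ f, x f * c := Finset.sum_le_sum fun f _ => mul_le_mul_of_nonneg_left (hle _) (hx.1 f)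
    _ = c := by rw [← Finset.sum_mul, hx.2, one_mul]

theorem apply_sub_eq_of_QSO_eq (hx : x ∈ stdSimplex ℝ G) (hle : ∀ g, x g ≤ c) {h f : G}
    (hV : QSO x h = c) (hf : x f ≠ 0) : x (h - f) = c := by
  have hmean : ∑ f, x f * x (h - f) = ∑ f, x f * c := by
    rw [← QSO_apply, hV, ← Finset.sum_mul, hx.2, one_mul]
  have hterm := (Finset.sum_eq_sum_iff_of_le fun f _ =>
    mul_le_mul_of_nonneg_left (hle (h - f)) (hx.1 f)).1 hmean f (mem_univ f)
  exact mul_left_cancel₀ hf hterm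

-- `f ↦ h - f` is an involution mapping the support of `x` into the level set `{x = c}`.
theorem apply_eq_of_QSO_eq (hx : x ∈ stdSimplex ℝ G) (hle : ∀ g, x g ≤ c) {h f : G}
    (hV : QSO x h = c) (hf : x f ≠ 0) : x f = c := by
  have hc : c ≠ 0 := ((lt_of_le_of_ne (hx.1 f) (Ne.symm hf)).trans_le (hle f)).ne'
  have hhf := apply_sub_eq_of_QSO_eq hx hle hV hf
  simpa using apply_sub_eq_of_QSO_eq hx hle hV (hhf ▸ hc : x (h - f) ≠ 0)

theorem QSO_sub_add_eq_of_QSO_QSO_eq (hx : x ∈ stdSimplex ℝ G) (hle : ∀ g, x g ≤ c)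
    {t a b : G} (hV : QSO (QSO x) t = c) (ha : x a ≠ 0) (hb : x b ≠ 0) :
    QSO x (t - (a + b)) = c := by
  refine apply_sub_eq_of_QSO_eq (QSO_mem_stdSimplex hx) (QSO_le hx hle) hV (ne_of_gt ?_)
  exact (mul_pos ((hx.1 a).lt_of_ne' ha) ((hx.1 b).lt_of_ne' hb)).trans_le
    (mul_le_QSO_add hx.1 a b)

end Extremal

theorem sum_ite_sub_mem (H : AddSubgroup G) [DecidablePred (· ∈ H)] (p : G) (a : ℝ) :
    ∑ g, (if g - p ∈ H then a else 0) = Nat.card H * a := by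
  rw [Fintype.sum_equiv (Equiv.subRight p) (fun g => if g - p ∈ H then a else 0)
      (fun u => if u ∈ H then a else 0) fun _ => rfl, Finset.sum_ite, Finset.sum_const_zero,
    add_zero, Finset.sum_const, nsmul_eq_mul, Nat.card_eq_fintype_card, Fintype.card_subtype]

theorem QSO_ite_sub_mem (H : AddSubgroup G) [DecidablePred (· ∈ H)] (p : G) (a : ℝ) (g : G) :
    QSO (fun g => if g - p ∈ H then a else 0) g =
      if g - (p + p) ∈ H then Nat.card H * a ^ 2 else 0 := by
  have hterm : ∀ f, (if f - p ∈ H then a else 0) * (if g - f - p ∈ H then a else 0) =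
      if f - p ∈ H then (if g - (p + p) ∈ H then a ^ 2 else 0) else 0 := fun f => by
    by_cases hf : f - p ∈ H
    · have hg : g - f - p ∈ H ↔ g - (p + p) ∈ H := by
        rw [show g - (p + p) = g - f - p + (f - p) by abel, H.add_mem_cancel_right hf]
      simp only [hf, hg, if_true, sq]
      split_ifs <;> simp
    · simp only [hf, if_false, zero_mul]
  simp_rw [QSO_apply, hterm, sum_ite_sub_mem]
  split_ifs <;> simp

end QSO

theorem extremal_norm_implies_coset_general {G : Type*} [AddCommGroup G] [Fintype G]
    (k : ℕ) (x : G → ℝ)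
    (hx_nonneg : ∀ g, 0 ≤ x g) (hx_sum : ∑ g, x g = 1)
    (hx_norm : ‖x‖ = 1 / (k : ℝ)) (hV2x_norm : ‖QSO (QSO x)‖ = 1 / (k : ℝ)) :
    ∃ (H : AddSubgroup G) (p : G), Nat.card H = k ∧
      (∀ g, g - p ∈ H → x g = 1 / (k : ℝ)) ∧ (∀ g, g - p ∉ H → x g = 0) ∧
      (∀ g, g - (p + p) ∈ H → QSO x g = 1 / (k : ℝ)) ∧
      (∀ g, g - (p + p) ∉ H → QSO x g = 0) := by
  classical
  set c := 1 / (k : ℝ)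
  have hx : x ∈ stdSimplex ℝ G := ⟨hx_nonneg, hx_sum⟩
  have hle : ∀ g, x g ≤ c := fun g => hx_norm ▸ (le_abs_self _).trans (norm_le_pi_norm x g)
  obtain ⟨p, -, hp⟩ := Finset.exists_ne_zero_of_sum_ne_zero (hx_sum ▸ one_ne_zero)
  obtain ⟨t, ht⟩ := exists_norm_apply_eq_pi_norm (QSO (QSO x))
  rw [hV2x_norm, Real.norm_of_nonneg (QSO_nonneg (QSO_nonneg hx_nonneg) t)] at ht
  have hxc : ∀ g, x g ≠ 0 → x g = c :=
    fun g => apply_eq_of_QSO_eq hx hle (QSO_sub_add_eq_of_QSO_QSO_eq hx hle ht hp hp)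
  have hc : c ≠ 0 := hxc p hp ▸ hp
  obtain ⟨H, hH⟩ := AddSubgroup.exists_mem_iff_sub_mem_of_sub_sub_sub_mem
    (A := {g | x g ≠ 0}) (t := t) hp fun a ha b hb d hd => by
      show x _ ≠ 0
      rwa [sub_sub t a b,
        apply_sub_eq_of_QSO_eq hx hle (QSO_sub_add_eq_of_QSO_QSO_eq hx hle ht ha hb) hd]
  have hx_eq : x = fun g => if g - p ∈ H then c else 0 := funext fun g => by
    by_cases hg : x g = 0
    · simp [hg, (hH g).not.1 (not_not.2 hg)]
    · simp [(hH g).1 hg, hxc g hg]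
  have hk : (k : ℝ) ≠ 0 := fun hk => hc (by simp [c, hk])
  have hcard : Nat.card H = k := by
    have hsum := hx_sum
    rw [hx_eq, sum_ite_sub_mem, mul_one_div, div_eq_one_iff_eq hk] at hsum
    exact_mod_cast hsum
  have hV_eq : QSO x = fun g => if g - (p + p) ∈ H then c else 0 := funext fun g => by
    rw [hx_eq, QSO_ite_sub_mem, hcard, sq, ← mul_assoc, mul_one_div_cancel hk, one_mul]
  exact ⟨H, p, hcard, fun g hg => by simp [hx_eq, hg], fun g hg => by simp [hx_eq, hg],
    fun g hg => by simp [hV_eq, hg], fun g hg => by simp [hV_eq, hg]⟩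

/-- If `x ∈ S(G)` has `‖x‖_∞ = 1/k` and `‖V²x‖_∞ = 1/k`, then there exist a subgroup
`H ≤ G` of order `k` and a point `p ∈ G` such that `x` is the uniform distribution on
the coset `p + H` (i.e. `x g = 1/k` iff `g - p ∈ H`, else `0`), and moreover `Vx` is
the uniform distribution on the coset `2p + H`. -/
theorem extremal_norm_implies_coset {G : Type*} [AddCommGroup G] [Fintype G]
    (k : ℕ) (hk : 0 < k) (x : G → ℝ)
    (hx_nonneg : ∀ g, 0 ≤ x g) (hx_sum : ∑ g, x g = 1)
    (hx_norm : ‖x‖ = 1 / (k : ℝ)) (hV2x_norm : ‖QSO (QSO x)‖ = 1 / (k : ℝ)) :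
    ∃ (H : AddSubgroup G) (p : G), Nat.card H = k ∧
      (∀ g, g - p ∈ H → x g = 1 / (k : ℝ)) ∧ (∀ g, g - p ∉ H → x g = 0) ∧
      (∀ g, g - (p + p) ∈ H → QSO x g = 1 / (k : ℝ)) ∧
      (∀ g, g - (p + p) ∉ H → QSO x g = 0) :=
  extremal_norm_implies_coset_general k x hx_nonneg hx_sum hx_norm hV2x_norm
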